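/- Let N ≥ 1, j = N/2, and define g_N : [0, π] → ℝ by g_N(θ) := Σ_{n=1}^{N} C(N, n) (sin(θ/2))^{2n} (cos(θ/2))^{2(N−n)} · Σ_{k=1}^{n} 1/√(k(N−k+1)). Then g_N is differentiable with g_N'(θ) = Σ_{m=−j}^{j−1} C(2j, j+m)^{1/2} C(2j, j+m+1)^{1/2} (sin(θ/2))^{2j+2m+1} (cos(θ/2))^{2j−2m−1}, and 0 ≤ g_N'(θ) ≤ 1 for all θ ∈ [0, π]; consequently 0 ≤ g_N(θ) ≤ θ for all θ ∈ [0, π]. -/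

import Mathlib

/-!
Differentiating term by term, the derivative of the `n`-th summand of `g_N` is `P n - Q n`, where
`P n = n C(N,n) A_n sin^{2n-1} cos^{2(N-n)+1}` and `Q n = (N-n) C(N,n) A_n sin^{2n+1} cos^{2(N-n)-1}`
(`A_n` the inner sum), and the sum telescopes to `Σ_i (P (i+1) - Q i)`. Since
`(i+1) C(N,i+1) = (N-i) C(N,i)` and `A_{i+1} - A_i = 1/√((i+1)(N-i))`, each `P (i+1) - Q i` is the
`i`-th term of `g_N'`. With the binomial weights `w_n = C(N,n) sin^{2n}(θ/2) cos^{2(N-n)}(θ/2)`,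
which sum to `1`, that term is `√(w_i w_{i+1}) ≤ (w_i + w_{i+1})/2`, so `0 ≤ g_N' ≤ 1` on `[0, π]`.
As `g_N(0) = 0`, monotonicity of `g_N` and of `θ - g_N` gives `0 ≤ g_N(θ) ≤ θ`.
-/

noncomputable section

/-- The explicit formula for the auxiliary distance `ρ_N` of the fuzzy sphere:
`g_N(θ) = Σ_{n=1}^{N} C(N,n) (sin(θ/2))^{2n} (cos(θ/2))^{2(N−n)} Σ_{k=1}^{n} 1/√(k(N−k+1))`. -/
def gN (N : ℕ) (θ : ℝ) : ℝ :=
  ∑ n ∈ Finset.Icc 1 N, (N.choose n : ℝ) *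
    Real.sin (θ / 2) ^ (2 * n) * Real.cos (θ / 2) ^ (2 * (N - n)) *
    ∑ k ∈ Finset.Icc 1 n, 1 / Real.sqrt (k * (N + 1 - k))

/-- The derivative of `g_N`:
`Σ_{m=−j}^{j−1} C(2j, j+m)^{1/2} C(2j, j+m+1)^{1/2} (sin(θ/2))^{2j+2m+1} (cos(θ/2))^{2j−2m−1}`,
written with `n = j + m ∈ {0, …, N−1}` (and `j = N/2`, `N = 2j`). -/
def gN' (N : ℕ) (θ : ℝ) : ℝ :=
  ∑ n ∈ Finset.range N, Real.sqrt (N.choose n) * Real.sqrt (N.choose (n + 1)) *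
    Real.sin (θ / 2) ^ (2 * n + 1) * Real.cos (θ / 2) ^ (2 * N - 2 * n - 1)

open Finset Real

def invSqrtSum (N n : ℕ) : ℝ := ∑ k ∈ Icc 1 n, 1 / √(k * (N + 1 - k))

lemma invSqrtSum_zero (N : ℕ) : invSqrtSum N 0 = 0 := by
  simp [invSqrtSum]

lemma invSqrtSum_succ (N i : ℕ) :
    invSqrtSum N (i + 1) = invSqrtSum N i + 1 / √((i + 1) * (N - i)) := by
  rw [invSqrtSum, sum_Icc_succ_top (by omega), ← invSqrtSum]
  push_cast
  rw [add_sub_add_right_eq_sub]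

lemma succ_mul_choose_succ_mul_invSqrtSum_sub {N i : ℕ} (hi : i < N) :
    (i + 1) * (N.choose (i + 1) : ℝ) * invSqrtSum N (i + 1)
      - (N - i : ℕ) * (N.choose i : ℝ) * invSqrtSum N i
      = √(N.choose i) * √(N.choose (i + 1)) := by
  set m : ℝ := (N - i : ℕ) * (N.choose i : ℝ)
  have hm : (i + 1) * (N.choose (i + 1) : ℝ) = m := by
    simp only [m]
    rw [mul_comm, mul_comm ((N - i : ℕ) : ℝ)]
    exact_mod_cast Nat.choose_succ_right_eq N i
  have hd : (0 : ℝ) < (i + 1) * (N - i) := by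
    have : (i : ℝ) < N := by exact_mod_cast hi
    nlinarith
  have hmsq : m ^ 2 = (i + 1) * (N - i) * ((N.choose i : ℝ) * N.choose (i + 1)) := by
    rw [sq]; nth_rewrite 1 [← hm]
    simp only [m]; push_cast [hi.le]; ring
  rw [hm, invSqrtSum_succ, mul_add, add_sub_cancel_left, ← sqrt_mul (Nat.cast_nonneg _),
    eq_comm, sqrt_eq_iff_mul_self_eq]
  · field_simp
    rw [sq_sqrt hd.le, hmsq]
    ring
  · positivity
  · positivity

lemma gN_eq_sum_range (N : ℕ) (θ : ℝ) :
    gN N θ = ∑ n ∈ range (N + 1), (N.choose n * invSqrtSum N n) *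
      (sin (θ / 2) ^ (2 * n) * cos (θ / 2) ^ (2 * (N - n))) := by
  rw [sum_range_succ', invSqrtSum_zero, mul_zero, zero_mul, add_zero, gN,
    ← Ico_add_one_right_eq_Icc, sum_Ico_eq_sum_range]
  simp only [add_tsub_cancel_right, add_comm 1, invSqrtSum]
  exact sum_congr rfl fun _ _ => by ring

lemma hasDerivAt_sin_half_pow_mul_cos_half_pow (n m : ℕ) (θ : ℝ) :
    HasDerivAt (fun x => sin (x / 2) ^ (2 * n) * cos (x / 2) ^ (2 * m))
      (n * sin (θ / 2) ^ (2 * n - 1) * cos (θ / 2) ^ (2 * m + 1) -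
        m * sin (θ / 2) ^ (2 * n + 1) * cos (θ / 2) ^ (2 * m - 1)) θ := by
  have hhalf : HasDerivAt (fun x : ℝ => x / 2) (1 / 2) θ := (hasDerivAt_id θ).div_const 2
  refine ((hhalf.sin.fun_pow (2 * n)).mul (hhalf.cos.fun_pow (2 * m))).congr_deriv ?_
  push_cast
  ring

lemma sum_range_succ_sub_eq {M : Type*} [AddCommGroup M] {f g : ℕ → M} {N : ℕ}
    (hf : f 0 = 0) (hg : g N = 0) :
    ∑ n ∈ range (N + 1), (f n - g n) = ∑ i ∈ range N, (f (i + 1) - g i) := by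
  rw [sum_sub_distrib, sum_sub_distrib, sum_range_succ', sum_range_succ g, hf, hg]
  simp

lemma hasDerivAt_gN (N : ℕ) (θ : ℝ) : HasDerivAt (gN N) (gN' N θ) θ := by
  set s := sin (θ / 2)
  set c := cos (θ / 2)
  set P : ℕ → ℝ := fun n =>
    (N.choose n * invSqrtSum N n) * (n * s ^ (2 * n - 1) * c ^ (2 * (N - n) + 1))
  set Q : ℕ → ℝ := fun n =>
    (N.choose n * invSqrtSum N n) * ((N - n : ℕ) * s ^ (2 * n + 1) * c ^ (2 * (N - n) - 1))
  have hsum : HasDerivAt (gN N) (∑ n ∈ range (N + 1), (P n - Q n)) θ := by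
    rw [funext (gN_eq_sum_range N)]
    refine (HasDerivAt.fun_sum fun n _ =>
      (hasDerivAt_sin_half_pow_mul_cos_half_pow n (N - n) θ).const_mul _).congr_deriv ?_
    exact sum_congr rfl fun n _ => by simp only [P, Q]; ring
  have hstep : ∀ i ∈ range N, P (i + 1) - Q i =
      √(N.choose i) * √(N.choose (i + 1)) * s ^ (2 * i + 1) * c ^ (2 * N - 2 * i - 1) := by
    intro i hi
    have hi : i < N := mem_range.mp hi
    rw [← succ_mul_choose_succ_mul_invSqrtSum_sub hi]
    simp only [P, Q, show 2 * (i + 1) - 1 = 2 * i + 1 by omega,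
      show 2 * (N - (i + 1)) + 1 = 2 * N - 2 * i - 1 by omega,
      show 2 * (N - i) - 1 = 2 * N - 2 * i - 1 by omega]
    push_cast
    ring
  rwa [sum_range_succ_sub_eq (by simp [P]) (by simp [Q]), sum_congr rfl hstep] at hsum

def binomWeight (N n : ℕ) (p q : ℝ) : ℝ := N.choose n * p ^ n * q ^ (N - n)

lemma sum_binomWeight (N : ℕ) {p q : ℝ} (h : p + q = 1) :
    ∑ n ∈ range (N + 1), binomWeight N n p q = 1 := by
  have := (add_pow p q N).symm
  rw [h, one_pow] at this
  rw [← this]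
  exact sum_congr rfl fun n _ => by unfold binomWeight; ring

lemma sqrt_binomWeight_sq {s c : ℝ} (hs : 0 ≤ s) (hc : 0 ≤ c) (N n : ℕ) :
    √(binomWeight N n (s ^ 2) (c ^ 2)) = √(N.choose n) * s ^ n * c ^ (N - n) := by
  rw [binomWeight, mul_assoc, pow_right_comm s 2, pow_right_comm c 2, ← mul_pow,
    sqrt_mul (Nat.cast_nonneg _), sqrt_sq (by positivity), mul_assoc]

lemma sum_sqrt_mul_sqrt_succ_le {a : ℕ → ℝ} (ha : ∀ n, 0 ≤ a n) (N : ℕ) :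
    ∑ n ∈ range N, √(a n) * √(a (n + 1)) ≤ ∑ n ∈ range (N + 1), a n := by
  have amgm : ∀ n, 2 * (√(a n) * √(a (n + 1))) ≤ a n + a (n + 1) := fun n => by
    have := two_mul_le_add_sq (√(a n)) (√(a (n + 1)))
    rwa [sq_sqrt (ha _), sq_sqrt (ha _), mul_assoc] at this
  have hlow : ∑ n ∈ range N, a n ≤ ∑ n ∈ range (N + 1), a n := by
    rw [sum_range_succ]; linarith [ha N]
  have hhigh : ∑ n ∈ range N, a (n + 1) ≤ ∑ n ∈ range (N + 1), a n := by
    rw [sum_range_succ']; linarith [ha 0]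
  have := sum_le_sum fun n (_ : n ∈ range N) => amgm n
  rw [← mul_sum, sum_add_distrib] at this
  linarith

lemma gN'_eq_sum_sqrt_binomWeight (N : ℕ) {θ : ℝ} (hs : 0 ≤ sin (θ / 2)) (hc : 0 ≤ cos (θ / 2)) :
    gN' N θ = ∑ n ∈ range N, √(binomWeight N n (sin (θ / 2) ^ 2) (cos (θ / 2) ^ 2)) *
      √(binomWeight N (n + 1) (sin (θ / 2) ^ 2) (cos (θ / 2) ^ 2)) := by
  refine sum_congr rfl fun n hn => ?_
  have hn : n < N := mem_range.mp hn
  rw [sqrt_binomWeight_sq hs hc, sqrt_binomWeight_sq hs hc,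
    show 2 * n + 1 = n + (n + 1) by omega,
    show 2 * N - 2 * n - 1 = (N - n) + (N - (n + 1)) by omega, pow_add, pow_add]
  ring

lemma gN'_nonneg (N : ℕ) {θ : ℝ} (hs : 0 ≤ sin (θ / 2)) (hc : 0 ≤ cos (θ / 2)) :
    0 ≤ gN' N θ :=
  sum_nonneg fun _ _ => by positivity

lemma gN'_le_one (N : ℕ) {θ : ℝ} (hs : 0 ≤ sin (θ / 2)) (hc : 0 ≤ cos (θ / 2)) :
    gN' N θ ≤ 1 := by
  rw [gN'_eq_sum_sqrt_binomWeight N hs hc,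
    ← sum_binomWeight N (sin_sq_add_cos_sq (θ / 2))]
  exact sum_sqrt_mul_sqrt_succ_le (fun n => by unfold binomWeight; positivity) N

lemma gN_zero (N : ℕ) : gN N 0 = 0 :=
  sum_eq_zero fun n hn => by
    have : 2 * n ≠ 0 := by have := (mem_Icc.mp hn).1; omega
    simp [this]

lemma monotoneOn_Icc_of_hasDerivAt_nonneg {f f' : ℝ → ℝ} {a b : ℝ}
    (hf : ∀ x ∈ Set.Icc a b, HasDerivAt f (f' x) x) (hf' : ∀ x ∈ Set.Icc a b, 0 ≤ f' x) :
    MonotoneOn f (Set.Icc a b) := by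
  refine monotoneOn_of_hasDerivWithinAt_nonneg (convex_Icc a b)
    (fun x hx => (hf x hx).continuousAt.continuousWithinAt) (fun x hx => ?_)
    (fun x hx => hf' x (interior_subset hx))
  exact (hf x (interior_subset hx)).hasDerivWithinAt

theorem gN_deriv_bounds_general (N : ℕ) :
    (∀ θ ∈ Set.Icc (0 : ℝ) Real.pi, HasDerivAt (gN N) (gN' N θ) θ) ∧
    (∀ θ ∈ Set.Icc (0 : ℝ) Real.pi, 0 ≤ gN' N θ ∧ gN' N θ ≤ 1) ∧
    (∀ θ ∈ Set.Icc (0 : ℝ) Real.pi, 0 ≤ gN N θ ∧ gN N θ ≤ θ) := by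
  have hderiv : ∀ θ ∈ Set.Icc 0 π, HasDerivAt (gN N) (gN' N θ) θ := fun θ _ => hasDerivAt_gN N θ
  have hbound : ∀ θ ∈ Set.Icc 0 π, 0 ≤ gN' N θ ∧ gN' N θ ≤ 1 := fun θ ⟨h0, hπ⟩ => by
    have hs : 0 ≤ sin (θ / 2) := sin_nonneg_of_nonneg_of_le_pi (by linarith) (by linarith)
    have hc : 0 ≤ cos (θ / 2) := cos_nonneg_of_mem_Icc ⟨by linarith, by linarith⟩
    exact ⟨gN'_nonneg N hs hc, gN'_le_one N hs hc⟩
  refine ⟨hderiv, hbound, fun θ hθ => ⟨?_, ?_⟩⟩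
  · have hmono := monotoneOn_Icc_of_hasDerivAt_nonneg hderiv fun x hx => (hbound x hx).1
    simpa [gN_zero] using hmono ⟨le_rfl, pi_pos.le⟩ hθ hθ.1
  · have hmono := monotoneOn_Icc_of_hasDerivAt_nonneg
      (fun x hx => (hasDerivAt_id x).sub (hderiv x hx)) fun x hx => sub_nonneg.2 (hbound x hx).2
    simpa [gN_zero] using hmono ⟨le_rfl, pi_pos.le⟩ hθ hθ.1

theorem gN_deriv_bounds (N : ℕ) (hN : 1 ≤ N) :
    (∀ θ ∈ Set.Icc (0 : ℝ) Real.pi, HasDerivAt (gN N) (gN' N θ) θ) ∧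
    (∀ θ ∈ Set.Icc (0 : ℝ) Real.pi, 0 ≤ gN' N θ ∧ gN' N θ ≤ 1) ∧
    (∀ θ ∈ Set.Icc (0 : ℝ) Real.pi, 0 ≤ gN N θ ∧ gN N θ ≤ θ) :=
  gN_deriv_bounds_general N
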